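/- arXiv:2204.04388 — 9 statements merged into one kernel-verified Lean document; each statement's English description precedes it below -/
import Mathlib

section
/- If τ is a monochromatic vertex-disconnection coloring (MVD-coloring) of a graph G, then the restriction of τ to any induced subgraph G[S] is an MVD-coloring of G[S]. -/
open SimpleGraph

variable {V : Type*}

/-- `S` is a set of vertices (not containing `x` or `y`) whose removal separates `x` from `y`:
every walk from `x` to `y` meets `S`. -/
def IsSepSet (G : SimpleGraph V) (S : Set V) (x y : V) : Prop :=
  x ∉ S ∧ y ∉ S ∧ ∀ p : G.Walk x y, ∃ v ∈ p.support, v ∈ S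

/-- `τ` is an MVD-coloring of `G`: every pair of distinct nonadjacent vertices is
separated by a monochromatic vertex cut. -/
def IsMVDColoring (G : SimpleGraph V) (τ : V → ℕ) : Prop :=
  ∀ x y : V, x ≠ y → ¬ G.Adj x y →
    ∃ S : Set V, IsSepSet G S x y ∧ ∀ u ∈ S, ∀ w ∈ S, τ u = τ w

/-- The monochromatic vertex-disconnection number: the maximum number of colors
used by an MVD-coloring of `G`. -/
noncomputable def mvd (G : SimpleGraph V) : ℕ :=
  sSup {k | ∃ τ : V → ℕ, IsMVDColoring G τ ∧ (Set.range τ).ncard = k}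

namespace SimpleGraph

variable {W : Type*} {G : SimpleGraph V} {H : SimpleGraph W}

theorem IsSepSet.comap (f : G →g H) {T : Set W} {x y : V} (hT : IsSepSet H T (f x) (f y)) :
    IsSepSet G (f ⁻¹' T) x y := by
  obtain ⟨hxT, hyT, hsep⟩ := hT
  refine ⟨hxT, hyT, fun p => ?_⟩
  obtain ⟨v, hv, hvT⟩ := hsep (p.map f)
  rw [Walk.support_map, List.mem_map] at hv
  obtain ⟨u, hu, rfl⟩ := hv
  exact ⟨u, hu, hvT⟩

theorem IsMVDColoring.comap (f : G ↪g H) {τ : W → ℕ} (hτ : IsMVDColoring H τ) :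
    IsMVDColoring G (τ ∘ f) := by
  intro x y hxy hadj
  obtain ⟨T, hT, hmono⟩ := hτ (f x) (f y) (f.injective.ne hxy) (by rwa [f.map_adj_iff])
  exact ⟨f ⁻¹' T, hT.comap f.toHom, fun u hu w hw => hmono _ hu _ hw⟩

end SimpleGraph

theorem restriction_of_MVD_coloring_is_MVD (G : SimpleGraph V) (τ : V → ℕ)
    (h : IsMVDColoring G τ) (S : Set V) :
    IsMVDColoring (G.induce S) (fun v => τ v.1) :=
  h.comap (Embedding.induce S)
end

section
/- For a connected non-complete graph G of order n, the monochromatic vertex-disconnection number satisfies 1 ≤ mvd(G) ≤ n − κ(G) + 1, where κ(G) is the vertex connectivity. -/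
open SimpleGraph

variable {V : Type*}

/-- The vertex connectivity of a (non-complete) graph: the least size of a set of
vertices separating some pair of distinct nonadjacent vertices. -/
noncomputable def kappa (G : SimpleGraph V) : ℕ :=
  sInf {k | ∃ (S : Set V) (x y : V), x ≠ y ∧ ¬ G.Adj x y ∧ IsSepSet G S x y ∧ S.ncard = k}

lemma sep_others (G : SimpleGraph V) {x y : V} (hxy : x ≠ y) (hadj : ¬ G.Adj x y) :
    IsSepSet G {v | v ≠ x ∧ v ≠ y} x y := by
  refine ⟨by simp, by simp, ?_⟩
  intro p
  cases p with
  | nil => exact absurd rfl hxy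
  | @cons _ b _ h q =>
    refine ⟨b, ?_, h.ne.symm, fun hb => hadj (hb ▸ h)⟩
    simp [SimpleGraph.Walk.support_cons, q.start_mem_support]

theorem mvd_bounds [Fintype V] (G : SimpleGraph V) (hconn : G.Connected)
    (hnc : G ≠ ⊤) :
    1 ≤ mvd G ∧ mvd G ≤ Fintype.card V - kappa G + 1 := by
  classical
  have hne : Nonempty V := hconn.nonempty
  -- there exist distinct nonadjacent vertices
  obtain ⟨x0, y0, hxy0, hadj0⟩ : ∃ x y : V, x ≠ y ∧ ¬ G.Adj x y := by
    by_contra h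
    push_neg at h
    apply hnc
    ext a b
    simp only [top_adj]
    exact ⟨fun hab => hab.ne, fun hne => h a b hne⟩
  -- the constant coloring is an MVD coloring
  have hconst : IsMVDColoring G (fun _ => 0) := by
    intro x y hxy hadj
    exact ⟨_, sep_others G hxy hadj, fun _ _ _ _ => rfl⟩
  have hmem1 : (1 : ℕ) ∈ {k | ∃ τ : V → ℕ, IsMVDColoring G τ ∧ (Set.range τ).ncard = k} :=
    ⟨fun _ => 0, hconst, by rw [Set.range_const]; exact Set.ncard_singleton 0⟩
  have hbdd : BddAbove {k | ∃ τ : V → ℕ, IsMVDColoring G τ ∧ (Set.range τ).ncard = k} := by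
    refine ⟨Fintype.card V, fun k hk => ?_⟩
    obtain ⟨τ, _, rfl⟩ := hk
    have h1 : (Set.range τ).ncard ≤ (Set.univ : Set V).ncard := by
      rw [← Set.image_univ]
      exact Set.ncard_image_le Set.finite_univ
    simpa [Set.ncard_univ, Nat.card_eq_fintype_card] using h1
  constructor
  · exact le_csSup hbdd hmem1
  · refine csSup_le ⟨1, hmem1⟩ ?_
    rintro k ⟨τ, hτ, rfl⟩
    obtain ⟨S, hsep, hmono⟩ := hτ x0 y0 hxy0 hadj0
    -- S is nonempty by connectivity
    obtain ⟨p⟩ := hconn.preconnected x0 y0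
    obtain ⟨s₀, _, hs₀⟩ := hsep.2.2 p
    -- kappa ≤ |S|
    have hk : kappa G ≤ S.ncard :=
      Nat.sInf_le ⟨S, x0, y0, hxy0, hadj0, hsep, rfl⟩
    -- range τ ⊆ τ '' S ∪ τ '' Sᶜ
    have hsub : Set.range τ ⊆ τ '' S ∪ τ '' Sᶜ := by
      rintro c ⟨v, rfl⟩
      by_cases hv : v ∈ S
      · exact Or.inl ⟨v, hv, rfl⟩
      · exact Or.inr ⟨v, hv, rfl⟩
    have himgS : (τ '' S).ncard ≤ 1 := by
      have : τ '' S ⊆ {τ s₀} := by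
        rintro c ⟨u, hu, rfl⟩
        exact hmono u hu s₀ hs₀
      calc (τ '' S).ncard ≤ ({τ s₀} : Set ℕ).ncard :=
            Set.ncard_le_ncard this (Set.finite_singleton _)
        _ = 1 := Set.ncard_singleton _
    have himgC : (τ '' Sᶜ).ncard ≤ Fintype.card V - S.ncard := by
      calc (τ '' Sᶜ).ncard ≤ Sᶜ.ncard := Set.ncard_image_le (Set.toFinite _)
        _ = Fintype.card V - S.ncard := by
            have h1 : S.ncard + Sᶜ.ncard = Fintype.card V := by
              rw [Set.ncard_add_ncard_compl, Nat.card_eq_fintype_card]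
            omega
    calc (Set.range τ).ncard ≤ (τ '' S ∪ τ '' Sᶜ).ncard :=
          Set.ncard_le_ncard hsub (Set.toFinite _)
      _ ≤ (τ '' S).ncard + (τ '' Sᶜ).ncard := Set.ncard_union_le _ _
      _ ≤ 1 + (Fintype.card V - S.ncard) := Nat.add_le_add himgS himgC
      _ ≤ Fintype.card V - kappa G + 1 := by omega
end

section
/- If G is a cycle of order n ≥ 4, then mvd(G) = ⌊n/2⌋. -/
open SimpleGraph

variable {V : Type*}

/-!
Upper bound: for a vertex `u` of the cycle, its two neighbours are nonadjacent, and every cut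
separating them contains `u`; since the rest of the cycle is a second path between them avoiding
`u`, the cut also contains another vertex, of the same colour as `u`. So every colour class has at
least two vertices and there are at most `⌊n/2⌋` colours.

Lower bound: colour `i` by `i mod ⌊n/2⌋`, so that each vertex shares its colour with a vertex at
distance `⌊n/2⌋`. If `x, y` are nonadjacent with `y` at distance `d ≤ n/2` after `x`, the successor
of `x` and its antipodal partner have the same colour and lie on different arcs between `x` and `y`.
-/

open Fin.CommRing

section General

variable {G : SimpleGraph V} {S : Set V} {x y : V}

theorem IsSepSet.symm (h : IsSepSet G S x y) : IsSepSet G S y x := by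
  refine ⟨h.2.1, h.1, fun p => ?_⟩
  obtain ⟨v, hv, hvS⟩ := h.2.2 p.reverse
  exact ⟨v, by simpa using hv, hvS⟩

theorem IsSepSet.of_forall_adj (P : V → Prop) (hx : x ∉ S) (hy : y ∉ S) (hPx : P x) (hPy : ¬P y)
    (hP : ∀ u v, G.Adj u v → u ∉ S → v ∉ S → P u → P v) : IsSepSet G S x y := by
  refine ⟨hx, hy, fun p => ?_⟩
  by_contra! hp
  obtain ⟨d, hd, hd₁, hd₂⟩ := p.exists_boundary_dart {v | P v} hPx hPy
  exact hd₂ (hP _ _ d.adj (hp _ (p.dart_fst_mem_support_of_mem_darts hd))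
    (hp _ (p.dart_snd_mem_support_of_mem_darts hd)) hd₁)

/-- A middle vertex `u` of an induced path `x - u - y` lies in every cut separating `x` from `y`;
a second walk from `x` to `y` avoiding `u` meets the cut elsewhere. -/
theorem IsMVDColoring.exists_ne_eq_of_walk {τ : V → ℕ} (hτ : IsMVDColoring G τ) {u : V}
    (hxy : x ≠ y) (hnadj : ¬G.Adj x y) (hxu : G.Adj x u) (huy : G.Adj u y)
    (p : G.Walk x y) (hp : u ∉ p.support) : ∃ w ≠ u, τ w = τ u := by
  obtain ⟨S, ⟨hx, hy, hsep⟩, hmono⟩ := hτ x y hxy hnadj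
  have huS : u ∈ S := by
    obtain ⟨v, hv, hvS⟩ := hsep (.cons hxu (.cons huy .nil))
    simp only [SimpleGraph.Walk.support_cons, SimpleGraph.Walk.support_nil, List.mem_cons,
      List.not_mem_nil, or_false] at hv
    rcases hv with rfl | rfl | rfl
    exacts [absurd hvS hx, hvS, absurd hvS hy]
  obtain ⟨w, hw, hwS⟩ := hsep p
  exact ⟨w, ne_of_mem_of_not_mem hw hp, hmono w hwS u huS⟩

theorem two_mul_ncard_range_le [Fintype V] {τ : V → ℕ} (hτ : ∀ u, ∃ w ≠ u, τ w = τ u) :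
    2 * (Set.range τ).ncard ≤ Fintype.card V := by
  rw [← Set.image_univ, ← Finset.coe_univ, ← Finset.coe_image, Set.ncard_coe_finset]
  refine Finset.mul_card_image_le_card _ 2 fun c hc => ?_
  obtain ⟨u, -, rfl⟩ := Finset.mem_image.mp hc
  obtain ⟨w, hwu, hw⟩ := hτ u
  exact Finset.one_lt_card.mpr ⟨w, by simp [hw], u, by simp, hwu⟩

theorem mvd_eq_of_isGreatest {k : ℕ} (hτ : ∃ τ : V → ℕ, IsMVDColoring G τ ∧ (Set.range τ).ncard = k)
    (hle : ∀ τ : V → ℕ, IsMVDColoring G τ → (Set.range τ).ncard ≤ k) : mvd G = k :=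
  IsGreatest.csSup_eq ⟨hτ, by rintro _ ⟨τ, hτ, rfl⟩; exact hle τ hτ⟩

end General

theorem Fin.val_sub_add_val_sub_of_ne {N : ℕ} {x y : Fin N} (h : x ≠ y) :
    (x - y).val + (y - x).val = N := by
  rcases lt_or_gt_of_ne h with h | h <;>
    rw [Fin.coe_sub_iff_lt.mpr h, Fin.coe_sub_iff_le.mpr h.le] <;> have := Fin.lt_def.mp h <;> omega

def antipodalColoring (N : ℕ) (i : Fin N) : ℕ := i.val % (N / 2)

theorem exists_antipodalColoring_eq {N : ℕ} (v : Fin N) : ∃ w : Fin N,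
    antipodalColoring N w = antipodalColoring N v ∧ ((w - v).val = N / 2 ∨ (v - w).val = N / 2) := by
  have hv := v.isLt
  unfold antipodalColoring
  by_cases h : v.val + N / 2 < N
  · refine ⟨⟨v.val + N / 2, h⟩, Nat.add_mod_right _ _, Or.inl ?_⟩
    rw [Fin.coe_sub_iff_le.mpr (Fin.le_def.mpr (by simp))]
    simp
  · have hw : v.val - N / 2 < N := by omega
    refine ⟨⟨v.val - N / 2, hw⟩, ?_, Or.inr ?_⟩
    · conv_rhs => rw [← Nat.sub_add_cancel (show N / 2 ≤ v.val by omega), Nat.add_mod_right]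
    · rw [Fin.coe_sub_iff_le.mpr (Fin.le_def.mpr (by simp))]
      simp only
      omega

theorem ncard_range_antipodalColoring (n : ℕ) :
    (Set.range (antipodalColoring (n + 2))).ncard = (n + 2) / 2 := by
  have : Set.range (antipodalColoring (n + 2)) = Set.Iio ((n + 2) / 2) := by
    ext c
    refine ⟨?_, fun (hc : c < _) => ⟨⟨c, by omega⟩, Nat.mod_eq_of_lt hc⟩⟩
    rintro ⟨i, rfl⟩
    exact Nat.mod_lt _ (by omega)
  rw [this, ← Finset.coe_range, Set.ncard_coe_finset, Finset.card_range]

namespace SimpleGraph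

variable {n : ℕ}

theorem cycleGraph_adj_val_sub {u v : Fin (n + 2)} (h : (cycleGraph (n + 2)).Adj u v)
    (x : Fin (n + 2)) :
    (u - x).val + 1 = (v - x).val ∨ (v - x).val + 1 = (u - x).val ∨
      (u - x).val = n + 1 ∧ (v - x).val = 0 ∨ (v - x).val = n + 1 ∧ (u - x).val = 0 := by
  have step : ∀ a b : Fin (n + 2), b - a = 1 →
      (a - x).val + 1 = (b - x).val ∨ (a - x).val = n + 1 ∧ (b - x).val = 0 := by
    intro a b hab
    rw [show b - x = a - x + 1 by rw [← hab]; abel, Fin.val_add_one]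
    split_ifs with hlast
    · exact Or.inr ⟨by rw [hlast, Fin.val_last], rfl⟩
    · exact Or.inl rfl
  rcases cycleGraph_adj.mp h with h | h
  · rcases step v u h with h | h <;> omega
  · rcases step u v h with h | h <;> omega

/-- `(u - x).val` is the position of `u` going around the cycle from `x`, so `z`, `y`, `w` are met
in this order: `z` and `w` lie on the two arcs between `x` and `y`. -/
theorem cycleGraph_isSepSet_pair {x y z w : Fin (n + 2)} (hz : 0 < (z - x).val)
    (hzy : (z - x).val < (y - x).val) (hyw : (y - x).val < (w - x).val) :
    IsSepSet (cycleGraph (n + 2)) {z, w} x y := by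
  have val_sub_ne {u v : Fin (n + 2)} (h : u ≠ v) : (u - x).val ≠ (v - x).val :=
    fun he => h (sub_left_inj.mp (Fin.ext he))
  let inArc (u : Fin (n + 2)) : Prop := (z - x).val < (u - x).val ∧ (u - x).val < (w - x).val
  have hw := (w - x).isLt
  refine .of_forall_adj (fun u => ¬inArc u) ?_ ?_ ?_ (not_not.mpr ⟨hzy, hyw⟩) ?_
  · simp only [Set.mem_insert_iff, Set.mem_singleton_iff, not_or]
    constructor <;> rintro rfl <;> simp at hz hyw
  · simp only [Set.mem_insert_iff, Set.mem_singleton_iff, not_or]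
    constructor <;> rintro rfl <;> omega
  · simp [inArc]
  · rintro u v huv hu - hu_out hv_in
    simp only [Set.mem_insert_iff, Set.mem_singleton_iff, not_or] at hu
    have := val_sub_ne hu.1
    have := val_sub_ne hu.2
    refine hu_out ?_
    rcases cycleGraph_adj_val_sub huv x with h | h | h | h <;> omega

theorem isMVDColoring_cycleGraph_of_forall {τ : Fin (n + 2) → ℕ}
    (h : ∀ x y : Fin (n + 2), 2 ≤ (y - x).val → (y - x).val ≤ (n + 2) / 2 →
      ∃ S, IsSepSet (cycleGraph (n + 2)) S x y ∧ ∀ u ∈ S, ∀ w ∈ S, τ u = τ w) :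
    IsMVDColoring (cycleGraph (n + 2)) τ := by
  intro x y hxy hnadj
  have hsum := Fin.val_sub_add_val_sub_of_ne hxy
  have hyx : (y - x).val ≠ 0 := fun h0 => hxy (sub_eq_zero.mp (Fin.ext h0)).symm
  rw [cycleGraph_adj'] at hnadj
  by_cases hd : (y - x).val ≤ (n + 2) / 2
  · exact h x y (by omega) hd
  · obtain ⟨S, hS, hmono⟩ := h y x (by omega) (by omega)
    exact ⟨S, hS.symm, hmono⟩

theorem isMVDColoring_antipodalColoring (hn : 2 ≤ n) :
    IsMVDColoring (cycleGraph (n + 2)) (antipodalColoring (n + 2)) := by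
  refine isMVDColoring_cycleGraph_of_forall fun x y hy₂ hym => ?_
  obtain ⟨w, hτw, hw⟩ := exists_antipodalColoring_eq (x + 1)
  have hx₁ : (x + 1 - x).val = 1 := by rw [add_sub_cancel_left, Fin.val_one]
  have hwx : (y - x).val < (w - x).val := by
    rcases hw with hw | hw
    · have := Fin.val_add_eq_ite (w - (x + 1)) (x + 1 - x)
      rw [sub_add_sub_cancel, hw, hx₁] at this
      split_ifs at this <;> omega
    · have := Fin.val_add_eq_ite (x + 1 - w) (w - x)
      rw [sub_add_sub_cancel, hw, hx₁] at this
      split_ifs at this <;> omega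
  refine ⟨{x + 1, w}, cycleGraph_isSepSet_pair (by omega) (by omega) hwx, ?_⟩
  simp only [Set.mem_insert_iff, Set.mem_singleton_iff]
  rintro _ (rfl | rfl) _ (rfl | rfl) <;> simp [hτw]

/-- The arc `u + 1, u + 2, …, u - 1` of the cycle, i.e. the cycle with `u` removed. -/
def cycleGraphHomFromPath (u : Fin (n + 2)) : pathGraph (n + 1) →g cycleGraph (n + 2) where
  toFun i := u + 1 + i.castSucc
  map_rel' {i j} h := by
    rw [cycleGraph_adj, add_sub_add_left_eq_sub, add_sub_add_left_eq_sub]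
    rcases pathGraph_adj.mp h with h | h
    · right
      rw [sub_eq_iff_eq_add', Fin.coeSucc_eq_succ, Fin.ext_iff]
      simpa using h.symm
    · left
      rw [sub_eq_iff_eq_add', Fin.coeSucc_eq_succ, Fin.ext_iff]
      simpa using h.symm

theorem exists_walk_cycleGraph_not_mem_support (u : Fin (n + 2)) :
    ∃ p : (cycleGraph (n + 2)).Walk (u + 1) (u - 1), u ∉ p.support := by
  let f := cycleGraphHomFromPath u
  obtain ⟨p⟩ := (pathGraph_connected n).preconnected 0 (Fin.last n)
  have hstart : f 0 = u + 1 := by simp [f, cycleGraphHomFromPath]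
  have hend : f (Fin.last n) = u - 1 := by
    have : (Fin.last n).castSucc + 1 + 1 = 0 := by
      rw [Fin.coeSucc_eq_succ, Fin.succ_last, Fin.last_add_one]
    simp only [f, cycleGraphHomFromPath, RelHom.coeFn_mk]
    linear_combination this
  refine ⟨(p.map f).copy hstart hend, fun hu => ?_⟩
  rw [Walk.support_copy, Walk.support_map, List.mem_map] at hu
  obtain ⟨i, -, hi⟩ := hu
  refine Fin.succ_ne_zero i ?_
  rw [← Fin.coeSucc_eq_succ]
  simp only [f, cycleGraphHomFromPath, RelHom.coeFn_mk] at hi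
  linear_combination hi

theorem IsMVDColoring.cycleGraph_exists_ne_eq (hn : 2 ≤ n) {τ : Fin (n + 2) → ℕ}
    (hτ : IsMVDColoring (cycleGraph (n + 2)) τ) (u : Fin (n + 2)) : ∃ w ≠ u, τ w = τ u := by
  have cast_ne_zero {k : ℕ} (hk₀ : 0 < k) (hk : k < n + 2) : (k : Fin (n + 2)) ≠ 0 := by
    rw [Ne, Fin.natCast_eq_zero]
    exact fun h => absurd (Nat.le_of_dvd hk₀ h) (by omega)
  obtain ⟨p, hp⟩ := exists_walk_cycleGraph_not_mem_support u
  refine hτ.exists_ne_eq_of_walk ?_ ?_ (cycleGraph_adj.mpr (.inl (by ring)))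
    (cycleGraph_adj.mpr (.inl (by ring))) p hp
  · intro h
    exact cast_ne_zero (k := 2) (by omega) (by omega) (by push_cast; linear_combination h)
  · rw [cycleGraph_adj]
    rintro (h | h)
    · exact cast_ne_zero (k := 1) (by omega) (by omega) (by push_cast; linear_combination h)
    · exact cast_ne_zero (k := 3) (by omega) (by omega) (by push_cast; linear_combination -h)

end SimpleGraph

theorem mvd_cycle (n : ℕ) (hn : 4 ≤ n) : mvd (cycleGraph n) = n / 2 := by
  obtain ⟨n, rfl⟩ : ∃ k, n = k + 2 := ⟨n - 2, by omega⟩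
  refine mvd_eq_of_isGreatest ⟨_, isMVDColoring_antipodalColoring (by omega),
    ncard_range_antipodalColoring n⟩ fun τ hτ => ?_
  have := two_mul_ncard_range_le (hτ.cycleGraph_exists_ne_eq (by omega))
  rw [Fintype.card_fin] at this
  omega
end

section
/- If G is a minimally 2-connected graph of order n ≥ 4, then mvd(G) ≤ ⌊n/2⌋. -/
open SimpleGraph

variable {V : Type*}

/-- `G` is 2-connected: it is connected, has at least three vertices, and removing
any single vertex leaves a connected graph. -/
def IsTwoConnected (G : SimpleGraph V) : Prop :=
  G.Connected ∧ (∀ v : V, (G.induce {u | u ≠ v}).Connected) ∧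
    ∃ x y z : V, x ≠ y ∧ x ≠ z ∧ y ≠ z

/-- `G` is minimally 2-connected: it is 2-connected but deleting any edge destroys
2-connectivity. -/
def MinimallyTwoConnected (G : SimpleGraph V) : Prop :=
  IsTwoConnected G ∧ ∀ e ∈ G.edgeSet, ¬ IsTwoConnected (G.deleteEdges {e})

/-! Each colour class of an MVD-colouring of a minimally 2-connected graph `G` has at least
two vertices. Indeed, for `n ≥ 4` such a `G` is triangle-free: for a triangle `xvy`, minimality
makes every edge of the triangle a bridge of `G` minus the opposite vertex, which forces the
neighbours of `x` and `y` into the triangle and makes `v` a cut vertex. So every vertex `v` has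
two nonadjacent neighbours `x, y`; a monochromatic cut separating them contains `v` (walk `x v y`)
and another vertex (a walk from `x` to `y` in `G - v`), so the colour of `v` occurs twice. -/

namespace SimpleGraph

variable {G : SimpleGraph V} {s : Set V} {a b c : V}

lemma induce_deleteEdges_singleton (ha : a ∈ s) (hb : b ∈ s) :
    (G.deleteEdges {s(a, b)}).induce s = (G.induce s).deleteEdges {s(⟨a, ha⟩, ⟨b, hb⟩)} := by
  ext u w
  simp [Subtype.ext_iff]

lemma induce_deleteEdges_singleton_of_notMem (ha : a ∉ s) :
    (G.deleteEdges {s(a, b)}).induce s = G.induce s := by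
  ext u w
  simp only [comap_adj, Function.Embedding.subtype_apply, deleteEdges_adj,
    Set.mem_singleton_iff, Sym2.eq_iff, and_iff_left_iff_imp]
  rintro - (⟨rfl, -⟩ | ⟨-, rfl⟩)
  exacts [ha u.2, ha w.2]

lemma Connected.connected_deleteEdges_of_adj_of_adj (hG : G.Connected) (hac : G.Adj a c)
    (hcb : G.Adj c b) : (G.deleteEdges {s(a, b)}).Connected := by
  refine hG.connected_delete_edge_of_not_isBridge fun hbr => ?_
  have hmem := isBridge_iff_forall_walk_mem_edges.1 hbr (.cons hac (.cons hcb .nil))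
  simp only [Walk.edges_cons, Walk.edges_nil, List.mem_cons, List.not_mem_nil, or_false] at hmem
  rcases hmem with h | h
  exacts [hcb.ne (Sym2.congr_right.1 h).symm, hac.ne (Sym2.congr_left.1 h)]

lemma exists_walk_notMem_support_of_connected_induce (h : (G.induce {u | u ≠ c}).Connected)
    (ha : a ≠ c) (hb : b ≠ c) : ∃ p : G.Walk a b, c ∉ p.support := by
  obtain ⟨q⟩ := h.preconnected ⟨a, ha⟩ ⟨b, hb⟩
  refine ⟨q.map (Embedding.induce _).toHom, fun hc => ?_⟩
  obtain ⟨x, -, hx⟩ := List.mem_map.1 (Walk.support_map _ q ▸ hc)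
  exact x.2 hx

end SimpleGraph

section TwoConnected

variable {G : SimpleGraph V} {a b c : V}

lemma IsTwoConnected.exists_ne_ne (h : IsTwoConnected G) (v w : V) : ∃ z, z ≠ v ∧ z ≠ w := by
  obtain ⟨-, -, x, y, z, hxy, hxz, hyz⟩ := h
  by_cases hx : x ≠ v ∧ x ≠ w
  · exact ⟨x, hx⟩
  by_cases hy : y ≠ v ∧ y ≠ w
  · exact ⟨y, hy⟩
  exact ⟨z, by grind, by grind⟩

lemma IsTwoConnected.exists_adj_ne (h : IsTwoConnected G) {v w : V} (hwv : w ≠ v) :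
    ∃ x, G.Adj v x ∧ x ≠ w := by
  obtain ⟨z, hzv, hzw⟩ := h.exists_ne_ne v w
  obtain ⟨p, hp⟩ := exists_walk_notMem_support_of_connected_induce (h.2.1 w) hwv.symm hzw
  obtain ⟨d, hd, hfst, -⟩ := p.exists_boundary_dart {v} rfl hzv
  refine ⟨d.snd, Set.mem_singleton_iff.1 hfst ▸ d.adj, ?_⟩
  rintro rfl
  exact hp (p.dart_snd_mem_support_of_mem_darts hd)

lemma IsTwoConnected.exists_adj_adj_ne (h : IsTwoConnected G) (v : V) :
    ∃ x y, G.Adj v x ∧ G.Adj v y ∧ x ≠ y := by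
  obtain ⟨w, hw, -⟩ := h.exists_ne_ne v v
  obtain ⟨x, hx, -⟩ := h.exists_adj_ne hw
  obtain ⟨y, hy, hyx⟩ := h.exists_adj_ne hx.ne'
  exact ⟨x, y, hx, hy, hyx.symm⟩

lemma IsTwoConnected.deleteEdges_of_adj_of_adj (h : IsTwoConnected G) (hbc : G.Adj b c)
    (hca : G.Adj c a)
    (hc : ((G.deleteEdges {s(a, b)}).induce {u | u ≠ c}).Connected) :
    IsTwoConnected (G.deleteEdges {s(a, b)}) := by
  obtain ⟨hG, hGv, hthree⟩ := h
  refine ⟨hG.connected_deleteEdges_of_adj_of_adj hca.symm hbc.symm, fun w => ?_, hthree⟩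
  by_cases hwc : w = c
  · exact hwc ▸ hc
  by_cases hwa : w = a
  · rw [induce_deleteEdges_singleton_of_notMem (by simp [hwa])]
    exact hGv w
  by_cases hwb : w = b
  · rw [Sym2.eq_swap, induce_deleteEdges_singleton_of_notMem (by simp [hwb])]
    exact hGv w
  rw [induce_deleteEdges_singleton (Ne.symm hwa) (Ne.symm hwb)]
  exact (hGv w).connected_deleteEdges_of_adj_of_adj (c := ⟨c, Ne.symm hwc⟩)
    (by simpa using hca.symm) (by simpa using hbc.symm)

lemma MinimallyTwoConnected.mem_edges_of_adj_of_adj (h : MinimallyTwoConnected G)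
    (hab : G.Adj a b) (hbc : G.Adj b c) (hca : G.Adj c a) (p : G.Walk a b)
    (hp : c ∉ p.support) : s(a, b) ∈ p.edges := by
  by_contra hpab
  refine h.2 s(a, b) hab (h.1.deleteEdges_of_adj_of_adj hbc hca ?_)
  have ha : a ≠ c := hca.ne'
  have hb : b ≠ c := hbc.ne
  rw [induce_deleteEdges_singleton ha hb]
  refine (h.1.2.1 c).connected_delete_edge_of_not_isBridge fun hbr => hbr ?_
  rw [← induce_deleteEdges_singleton ha hb]
  exact ⟨(p.toDeleteEdge s(a, b) hpab).induce _ fun u hu =>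
    ne_of_mem_of_not_mem (by rwa [Walk.support_transfer] at hu) hp⟩

end TwoConnected

section Triangles

variable {G : SimpleGraph V}

lemma MinimallyTwoConnected.eq_or_eq_of_adj (h : MinimallyTwoConnected G) {x v y c : V}
    (hxv : G.Adj x v) (hvy : G.Adj v y) (hyx : G.Adj y x) (hyc : G.Adj y c) :
    c = x ∨ c = v := by
  by_contra! hc
  obtain ⟨q, hq⟩ := exists_walk_notMem_support_of_connected_induce (h.1.2.1 y) hyc.ne' hvy.ne
  -- Where `q` leaves `S` we get a walk from `y` to `x` avoiding `v`, or from `y` to `v`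
  -- avoiding `x`, that does not use the triangle edge at `y`: `key` rules out both.
  set S := {w | ∃ p : G.Walk y w, x ∉ p.support ∧ v ∉ p.support}
  have hcS : c ∈ S := ⟨.cons hyc .nil, by simp [hyx.ne', hc.1.symm], by simp [hvy.ne, hc.2.symm]⟩
  have hvS : v ∉ S := fun ⟨p, _, hpv⟩ => hpv p.end_mem_support
  obtain ⟨d, hd, ⟨p, hpx, hpv⟩, hout⟩ := q.exists_boundary_dart S hcS hvS
  have hfst : d.fst ≠ y := ne_of_mem_of_not_mem (q.dart_fst_mem_support_of_mem_darts hd) hq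
  have hsnd : d.snd = x ∨ d.snd = v := by
    by_contra! hne
    exact hout ⟨p.concat d.adj, by simp [hpx, Ne.symm hne.1], by simp [hpv, Ne.symm hne.2]⟩
  have key {z t : V} (hyz : G.Adj y z) (hzt : G.Adj z t) (hty : G.Adj t y) (hz : d.snd = z)
      (hpz : z ∉ p.support) (hpt : t ∉ p.support) : False := by
    subst hz
    have hmem := h.mem_edges_of_adj_of_adj hyz hzt hty (p.concat d.adj)
      (by simp [hpt, hzt.ne'])
    rw [Walk.edges_concat, List.concat_eq_append, List.mem_append, List.mem_singleton] at hmem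
    rcases hmem with he | he
    · exact hpz (p.snd_mem_support_of_mem_edges he)
    · exact hfst (Sym2.congr_left.1 he).symm
  rcases hsnd with hx | hv
  · exact key hyx hxv hvy hx hpx hpv
  · exact key hvy.symm hxv.symm hyx.symm hv hpv hpx

lemma MinimallyTwoConnected.cliqueFree_three [Fintype V] (hn : 4 ≤ Fintype.card V)
    (h : MinimallyTwoConnected G) : G.CliqueFree 3 := by
  classical
  intro t ht
  obtain ⟨x, v, y, hxv, hxy, hvy, rfl⟩ := is3Clique_iff.1 ht
  obtain ⟨z, hz⟩ : ∃ z, z ∉ ({x, v, y} : Finset V) := by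
    by_contra! hall
    have := Finset.card_le_card (fun z _ => hall z : Finset.univ ⊆ {x, v, y})
    have := Finset.card_le_three (a := x) (b := v) (c := y)
    rw [Finset.card_univ] at *
    omega
  simp only [Finset.mem_insert, Finset.mem_singleton, not_or] at hz
  obtain ⟨p, hp⟩ := exists_walk_notMem_support_of_connected_induce (h.1.2.1 v) hxv.ne hz.2.1
  obtain ⟨d, hd, hfst, hsnd⟩ := p.exists_boundary_dart {x, y} (by simp) (by simp [hz.1, hz.2.2])
  have hv : d.snd ≠ v := ne_of_mem_of_not_mem (p.dart_snd_mem_support_of_mem_darts hd) hp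
  simp only [Set.mem_insert_iff, Set.mem_singleton_iff, not_or] at hfst hsnd
  rcases hfst with hx | hy
  · have := h.eq_or_eq_of_adj hvy.symm hxv.symm hxy (hx ▸ d.adj)
    tauto
  · have := h.eq_or_eq_of_adj hxv hvy hxy.symm (hy ▸ d.adj)
    tauto

end Triangles

lemma two_mul_ncard_range_le_card {α : Type*} [Fintype V] (f : V → α)
    (hf : ∀ v, ∃ u ≠ v, f u = f v) : 2 * (Set.range f).ncard ≤ Fintype.card V := by
  classical
  rw [← Set.image_univ, ← Finset.coe_univ, ← Finset.coe_image, Set.ncard_coe_finset]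
  refine Finset.mul_card_image_le_card _ 2 fun b hb => ?_
  obtain ⟨v, -, rfl⟩ := Finset.mem_image.1 hb
  obtain ⟨u, huv, hu⟩ := hf v
  exact Finset.one_lt_card.2 ⟨u, by simp [hu], v, by simp, huv⟩

lemma IsMVDColoring.exists_ne_eq {G : SimpleGraph V} {τ : V → ℕ} {v x y : V}
    (hτ : IsMVDColoring G τ) (hv : (G.induce {u | u ≠ v}).Connected) (hx : G.Adj v x)
    (hy : G.Adj v y) (hxy : x ≠ y) (hnxy : ¬ G.Adj x y) : ∃ u ≠ v, τ u = τ v := by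
  obtain ⟨S, ⟨hxS, hyS, hsep⟩, hmono⟩ := hτ x y hxy hnxy
  have hvS : v ∈ S := by
    obtain ⟨w, hw, hwS⟩ := hsep (.cons hx.symm (.cons hy .nil))
    simp only [Walk.support_cons, Walk.support_nil, List.mem_cons, List.not_mem_nil,
      or_false] at hw
    rcases hw with rfl | rfl | rfl
    exacts [absurd hwS hxS, hwS, absurd hwS hyS]
  obtain ⟨p, hp⟩ := exists_walk_notMem_support_of_connected_induce hv hx.ne' hy.ne'
  obtain ⟨u, hu, huS⟩ := hsep p
  exact ⟨u, ne_of_mem_of_not_mem hu hp, hmono u huS v hvS⟩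

theorem mvd_minimally_two_connected [Fintype V] (G : SimpleGraph V)
    (hn : 4 ≤ Fintype.card V) (h : MinimallyTwoConnected G) :
    mvd G ≤ Fintype.card V / 2 := by
  refine csSup_le' ?_
  rintro k ⟨τ, hτ, rfl⟩
  rw [Nat.le_div_iff_mul_le two_pos, mul_comm]
  refine two_mul_ncard_range_le_card τ fun v => ?_
  obtain ⟨x, y, hx, hy, hxy⟩ := h.1.exists_adj_adj_ne v
  have hnxy : ¬ G.Adj x y :=
    isIndepSet_neighborSet_of_triangleFree G (h.cliqueFree_three hn) v hx hy hxy
  exact hτ.exists_ne_eq (h.1.2.1 v) hx hy hxy hnxy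
end

section
/- For every wheel graph W_n = C_{n−1} ∨ K_1 with n > 4, mvd(W_n) = 1. -/
open SimpleGraph

variable {V : Type*}

/-- The wheel graph `W_n`: the join of a cycle of order `n - 1` with one extra vertex. -/
def wheelGraph (n : ℕ) : SimpleGraph (Fin (n - 1) ⊕ Unit) :=
  SimpleGraph.fromRel (fun x y =>
    (∃ a b, x = Sum.inl a ∧ y = Sum.inl b ∧ (cycleGraph (n - 1)).Adj a b) ∨
      (x.isLeft ∧ y.isRight))

/-! The two rim neighbours of a rim vertex `a` of `W_n` are distinct and, once the rim has at
least four vertices, nonadjacent. Both `a` and the hub are common neighbours of them, and a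
separating set must contain every common neighbour, so a monochromatic separating set forces
`a` to have the colour of the hub. -/

namespace SimpleGraph

variable {G : SimpleGraph V} {S : Set V} {x y z w : V}

theorem IsSepSet.mem_of_mem_commonNeighbors (hS : IsSepSet G S x y)
    (hz : z ∈ G.commonNeighbors x y) : z ∈ S := by
  obtain ⟨hxz, hyz⟩ := G.mem_commonNeighbors.1 hz
  obtain ⟨v, hv, hvS⟩ := hS.2.2 (.cons hxz (.cons hyz.symm .nil))
  simp only [Walk.support_cons, Walk.support_nil, List.mem_cons, List.not_mem_nil, or_false] at hv
  rcases hv with rfl | rfl | rfl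
  exacts [absurd hvS hS.1, hvS, absurd hvS hS.2.1]

theorem isSepSet_compl_pair (hxy : x ≠ y) (hadj : ¬ G.Adj x y) :
    IsSepSet G ({x, y}ᶜ : Set V) x y := by
  refine ⟨by simp, by simp, fun p => ?_⟩
  cases p with
  | nil => exact absurd rfl hxy
  | @cons _ v _ h q =>
    refine ⟨v, by simp, ?_⟩
    rintro (rfl | rfl)
    exacts [G.irrefl h, hadj h]

theorem IsMVDColoring.eq_of_mem_commonNeighbors {τ : V → ℕ} (hτ : IsMVDColoring G τ)
    (hxy : x ≠ y) (hadj : ¬ G.Adj x y) (hz : z ∈ G.commonNeighbors x y)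
    (hw : w ∈ G.commonNeighbors x y) : τ z = τ w := by
  obtain ⟨S, hS, hmono⟩ := hτ x y hxy hadj
  exact hmono z (hS.mem_of_mem_commonNeighbors hz) w (hS.mem_of_mem_commonNeighbors hw)

theorem isMVDColoring_const (G : SimpleGraph V) (c : ℕ) : IsMVDColoring G fun _ => c :=
  fun _ _ hxy hadj => ⟨_, isSepSet_compl_pair hxy hadj, fun _ _ _ _ => rfl⟩

theorem mvd_eq_one_of_forall_isMVDColoring [Nonempty V]
    (h : ∀ τ, IsMVDColoring G τ → ∀ u v, τ u = τ v) : mvd G = 1 := by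
  suffices {k | ∃ τ : V → ℕ, IsMVDColoring G τ ∧ (Set.range τ).ncard = k} = {1} by
    rw [mvd, this, csSup_singleton]
  ext k
  constructor
  · rintro ⟨τ, hτ, rfl⟩
    obtain ⟨v⟩ := ‹Nonempty V›
    rw [show τ = fun _ => τ v from funext fun u => h τ hτ u v, Set.range_const,
      Set.ncard_singleton]
    rfl
  · rintro rfl
    exact ⟨fun _ => 0, isMVDColoring_const G 0, by rw [Set.range_const, Set.ncard_singleton]⟩

theorem cycleGraph_exists_mem_commonNeighbors {m : ℕ} (hm : 4 ≤ m) (a : Fin m) :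
    ∃ x y, x ≠ y ∧ ¬ (cycleGraph m).Adj x y ∧ a ∈ (cycleGraph m).commonNeighbors x y := by
  obtain ⟨k, rfl⟩ : ∃ k, m = k + 4 := ⟨m - 4, by omega⟩
  have hsub : (a + 1) - (a - 1) = 2 := by abel
  have hsub' : (a - 1) - (a + 1) = -2 := by abel
  have h2 : ((2 : Fin (k + 4)) : ℕ) = 2 := by simp
  refine ⟨a - 1, a + 1, fun h => ?_, ?_, ?_⟩
  · rw [h, sub_self, Fin.ext_iff, h2] at hsub
    simp at hsub
  · rw [cycleGraph_adj, hsub, hsub']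
    simp only [Fin.ext_iff, Fin.val_neg, Fin.val_one, Fin.val_zero, h2]
    simp
  · simp [mem_commonNeighbors, cycleGraph_adj]

theorem wheelGraph_adj_inl_inr {n : ℕ} (a : Fin (n - 1)) (u : Unit) :
    (wheelGraph n).Adj (.inl a) (.inr u) := by
  simp [wheelGraph]

theorem wheelGraph_adj_inl_inl {n : ℕ} {a b : Fin (n - 1)} :
    (wheelGraph n).Adj (.inl a) (.inl b) ↔ (cycleGraph (n - 1)).Adj a b := by
  simpa [wheelGraph, adj_comm _ b a] using Adj.ne

theorem IsMVDColoring.wheelGraph_eq_hub {n : ℕ} (hn : 4 < n) {τ : Fin (n - 1) ⊕ Unit → ℕ}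
    (hτ : IsMVDColoring (wheelGraph n) τ) (v : Fin (n - 1) ⊕ Unit) : τ v = τ (.inr ()) := by
  obtain a | ⟨⟩ := v
  · obtain ⟨x, y, hxy, hadj, ha⟩ := cycleGraph_exists_mem_commonNeighbors (by omega) a
    rw [mem_commonNeighbors] at ha
    refine hτ.eq_of_mem_commonNeighbors (x := .inl x) (y := .inl y) (by simpa using hxy)
      (wheelGraph_adj_inl_inl.not.2 hadj) ?_ ?_
    · exact ⟨wheelGraph_adj_inl_inl.2 ha.1, wheelGraph_adj_inl_inl.2 ha.2⟩
    · exact ⟨wheelGraph_adj_inl_inr x (), wheelGraph_adj_inl_inr y ()⟩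
  · rfl

end SimpleGraph

theorem mvd_wheel (n : ℕ) (hn : 4 < n) : mvd (wheelGraph n) = 1 :=
  mvd_eq_one_of_forall_isMVDColoring fun _ hτ u v => by
    rw [hτ.wheelGraph_eq_hub hn u, hτ.wheelGraph_eq_hub hn v]
end

section
/- For the complete bipartite graph K_{n_1,n_2} with n_2 ≥ n_1 ≥ 2, mvd(K_{n_1,n_2}) = 2. -/
open SimpleGraph

variable {V : Type*}

section Aux

variable {n₁ n₂ : ℕ}

/-- Separating two same-side vertices by the opposite side. -/
lemma sepset_inl (a b : Fin n₁) (hab : a ≠ b) :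
    IsSepSet (completeBipartiteGraph (Fin n₁) (Fin n₂)) (Set.range Sum.inr)
      (Sum.inl a) (Sum.inl b) := by
  refine ⟨by simp, by simp, fun p => ?_⟩
  have hlen : 0 < p.length := by
    rcases Nat.eq_zero_or_pos p.length with h | h
    · exact absurd (Sum.inl_injective (Walk.eq_of_length_eq_zero h)) hab
    · exact h
  refine ⟨p.getVert 1, ?_, ?_⟩
  · rw [Walk.mem_support_iff_exists_getVert]
    exact ⟨1, rfl, hlen⟩
  · have hadj := p.adj_getVert_succ (i := 0) hlen
    rw [p.getVert_zero] at hadj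
    rcases h : p.getVert 1 with c | c
    · rw [h] at hadj; simp at hadj
    · exact ⟨c, rfl⟩

lemma sepset_inr (a b : Fin n₂) (hab : a ≠ b) :
    IsSepSet (completeBipartiteGraph (Fin n₁) (Fin n₂)) (Set.range Sum.inl)
      (Sum.inr a) (Sum.inr b) := by
  refine ⟨by simp, by simp, fun p => ?_⟩
  have hlen : 0 < p.length := by
    rcases Nat.eq_zero_or_pos p.length with h | h
    · exact absurd (Sum.inr_injective (Walk.eq_of_length_eq_zero h)) hab
    · exact h
  refine ⟨p.getVert 1, ?_, ?_⟩
  · rw [Walk.mem_support_iff_exists_getVert]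
    exact ⟨1, rfl, hlen⟩
  · have hadj := p.adj_getVert_succ (i := 0) hlen
    rw [p.getVert_zero] at hadj
    rcases h : p.getVert 1 with c | c
    · exact ⟨c, rfl⟩
    · rw [h] at hadj; simp at hadj

end Aux

theorem mvd_complete_bipartite (n₁ n₂ : ℕ) (h1 : 2 ≤ n₁) (h12 : n₁ ≤ n₂) :
    mvd (completeBipartiteGraph (Fin n₁) (Fin n₂)) = 2 := by
  classical
  have hn1 : 0 < n₁ := by omega
  have hn2 : 0 < n₂ := by omega
  set G := completeBipartiteGraph (Fin n₁) (Fin n₂) with hG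
  set M := {k | ∃ τ : Fin n₁ ⊕ Fin n₂ → ℕ, IsMVDColoring G τ ∧ (Set.range τ).ncard = k}
    with hM
  have hmem : 2 ∈ M := by
    refine ⟨Sum.elim (fun _ => 0) (fun _ => 1), ?_, ?_⟩
    · rintro (a | a) (b | b) hxy hadj
      · exact ⟨Set.range Sum.inr, sepset_inl a b (fun h => hxy (by rw [h])),
          by rintro u ⟨i, rfl⟩ w ⟨j, rfl⟩; rfl⟩
      · exact absurd (by simp [hG]) hadj
      · exact absurd (by simp [hG]) hadj
      · exact ⟨Set.range Sum.inl, sepset_inr a b (fun h => hxy (by rw [h])),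
          by rintro u ⟨i, rfl⟩ w ⟨j, rfl⟩; rfl⟩
    · have : Set.range (Sum.elim (fun _ : Fin n₁ => 0) (fun _ : Fin n₂ => 1)) = {0, 1} := by
        ext k
        constructor
        · rintro ⟨(a | a), rfl⟩ <;> simp
        · rintro (rfl | rfl)
          · exact ⟨Sum.inl ⟨0, hn1⟩, rfl⟩
          · exact ⟨Sum.inr ⟨0, hn2⟩, rfl⟩
      rw [this, Set.ncard_pair (by norm_num)]
  have hub : ∀ k ∈ M, k ≤ 2 := by
    rintro k ⟨τ, hτ, rfl⟩
    -- all right vertices have the same color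
    have hR : ∀ i j : Fin n₂, τ (Sum.inr i) = τ (Sum.inr j) := by
      intro i j
      obtain ⟨S, ⟨hx, hy, hsep⟩, hmono⟩ :=
        hτ (Sum.inl ⟨0, hn1⟩) (Sum.inl ⟨1, by omega⟩) (by simp [Fin.ext_iff]) (by simp [hG])
      have hmemS : ∀ r : Fin n₂, Sum.inr r ∈ S := by
        intro r
        have ha : G.Adj (Sum.inl ⟨0, hn1⟩) (Sum.inr r) := by simp [hG]
        have hb : G.Adj (Sum.inr r) (Sum.inl ⟨1, by omega⟩) := by simp [hG]
        obtain ⟨v, hv, hvS⟩ := hsep (Walk.cons ha (Walk.cons hb Walk.nil))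
        simp [Walk.support_cons] at hv
        rcases hv with rfl | rfl | rfl
        · exact absurd hvS hx
        · exact hvS
        · exact absurd hvS hy
      exact hmono _ (hmemS i) _ (hmemS j)
    have hL : ∀ i j : Fin n₁, τ (Sum.inl i) = τ (Sum.inl j) := by
      intro i j
      obtain ⟨S, ⟨hx, hy, hsep⟩, hmono⟩ :=
        hτ (Sum.inr ⟨0, hn2⟩) (Sum.inr ⟨1, by omega⟩) (by simp [Fin.ext_iff]) (by simp [hG])
      have hmemS : ∀ r : Fin n₁, Sum.inl r ∈ S := by
        intro r
        have ha : G.Adj (Sum.inr ⟨0, hn2⟩) (Sum.inl r) := by simp [hG]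
        have hb : G.Adj (Sum.inl r) (Sum.inr ⟨1, by omega⟩) := by simp [hG]
        obtain ⟨v, hv, hvS⟩ := hsep (Walk.cons ha (Walk.cons hb Walk.nil))
        simp [Walk.support_cons] at hv
        rcases hv with rfl | rfl | rfl
        · exact absurd hvS hx
        · exact hvS
        · exact absurd hvS hy
      exact hmono _ (hmemS i) _ (hmemS j)
    have hsub : Set.range τ ⊆ {τ (Sum.inl ⟨0, hn1⟩), τ (Sum.inr ⟨0, hn2⟩)} := by
      rintro c ⟨(a | a), rfl⟩
      · exact Or.inl (hL a ⟨0, hn1⟩)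
      · exact Or.inr (hR a ⟨0, hn2⟩)
    calc (Set.range τ).ncard ≤ ({τ (Sum.inl ⟨0, hn1⟩), τ (Sum.inr ⟨0, hn2⟩)} : Set ℕ).ncard :=
          Set.ncard_le_ncard hsub ((Set.finite_singleton _).insert _)
      _ ≤ 2 := (Set.ncard_insert_le _ _).trans (by simp)
  exact le_antisymm (csSup_le ⟨2, hmem⟩ hub) (le_csSup ⟨2, hub⟩ hmem)
end

section
/- For a connected graph G of order n, mvd(G) = n if and only if every block of G is a complete graph. -/
/-!
An MVD-coloring with `|V|` colors is injective, so its monochromatic cuts have at most one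
vertex: `mvd G = |V|` says exactly that any two nonadjacent vertices are separated by at most
one vertex. Two vertices of a block are never separated by a single vertex, so blocks must be
complete. Conversely, if no single vertex separates nonadjacent `x` and `y` (joined by a walk),
the vertices on `x`–`y` paths induce a connected subgraph without a cut vertex: after deleting
`v`, every other vertex is still joined along its path to `x` or to `y`, and `x` to `y` by a
path avoiding `v`. That subgraph lies in a block, which is then not complete.
-/

open SimpleGraph

variable {V : Type*}

/-- `G` has no cut vertex: removing any single vertex leaves a preconnected graph. -/
def NoCutVertex (G : SimpleGraph V) : Prop :=
  ∀ v : V, (G.induce {u | u ≠ v}).Preconnected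

/-- `B` is a block of `G`: a maximal vertex set inducing a connected subgraph
without a cut vertex. -/
def IsBlock (G : SimpleGraph V) (B : Set V) : Prop :=
  (G.induce B).Connected ∧ NoCutVertex (G.induce B) ∧
    ∀ C : Set V, B ⊆ C → (G.induce C).Connected → NoCutVertex (G.induce C) → C = B

namespace Set

variable {α β : Type*} [Finite α]

theorem ncard_range_le_natCard (f : α → β) : (range f).ncard ≤ Nat.card α := by
  rw [← image_univ, ← ncard_univ]
  exact ncard_image_le

theorem ncard_range_eq_natCard_iff (f : α → β) :
    (range f).ncard = Nat.card α ↔ Function.Injective f := by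
  rw [← image_univ, ← ncard_univ, ncard_image_iff, injOn_univ]

end Set

section

variable {G : SimpleGraph V}

theorem SimpleGraph.reachable_induce_iff {s : Set V} {a b : V} (ha : a ∈ s) (hb : b ∈ s) :
    (G.induce s).Reachable ⟨a, ha⟩ ⟨b, hb⟩ ↔ ∃ p : G.Walk a b, ∀ u ∈ p.support, u ∈ s := by
  refine ⟨fun ⟨q⟩ => ⟨q.map (Embedding.induce s).toHom, fun u hu => ?_⟩,
    fun ⟨p, hp⟩ => ⟨p.induce s hp⟩⟩
  have hu' : u ∈ q.support.map Subtype.val := (Walk.support_map _ q).subst (motive := (u ∈ ·)) hu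
  obtain ⟨u, -, rfl⟩ := List.mem_map.mp hu'
  exact u.2

theorem noCutVertex_induce_iff {s : Set V} :
    NoCutVertex (G.induce s) ↔ ∀ v ∈ s, (G.induce (s \ {v})).Preconnected := by
  refine ⟨fun h v hv a b => ?_, fun h v a b => ?_⟩
  · let f : (G.induce s).induce {u | u ≠ ⟨v, hv⟩} →g G.induce (s \ {v}) :=
      { toFun := fun u => ⟨u.1.1, u.1.2, fun he => u.2 (Subtype.ext he)⟩, map_rel' := id }
    exact (h ⟨v, hv⟩ ⟨⟨a, a.2.1⟩, fun he => a.2.2 (congrArg Subtype.val he)⟩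
      ⟨⟨b, b.2.1⟩, fun he => b.2.2 (congrArg Subtype.val he)⟩).map f
  · let f : G.induce (s \ {v.1}) →g (G.induce s).induce {u | u ≠ v} :=
      { toFun := fun u => ⟨⟨u.1, u.2.1⟩, fun he => u.2.2 (congrArg Subtype.val he)⟩,
        map_rel' := id }
    exact (h v v.2 ⟨a.1, a.1.2, fun he => a.2 (Subtype.ext he)⟩
      ⟨b.1, b.1.2, fun he => b.2 (Subtype.ext he)⟩).map f

theorem exists_walk_not_mem_support_of_noCutVertex {B : Set V} (hc : (G.induce B).Preconnected)
    (hn : NoCutVertex (G.induce B)) {x y v : V} (hx : x ∈ B) (hy : y ∈ B) (hvx : v ≠ x)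
    (hvy : v ≠ y) : ∃ p : G.Walk x y, v ∉ p.support := by
  by_cases hv : v ∈ B
  · obtain ⟨p, hp⟩ := (reachable_induce_iff (s := B \ {v}) ⟨hx, hvx.symm⟩ ⟨hy, hvy.symm⟩).1
      (noCutVertex_induce_iff.1 hn v hv _ _)
    exact ⟨p, fun h => (hp v h).2 rfl⟩
  · obtain ⟨p, hp⟩ := (reachable_induce_iff hx hy).1 (hc _ _)
    exact ⟨p, fun h => hv (hp v h)⟩

theorem exists_isBlock_superset [Finite V] {S : Set V} (hc : (G.induce S).Connected)
    (hn : NoCutVertex (G.induce S)) : ∃ B, S ⊆ B ∧ IsBlock G B := by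
  obtain ⟨B, hSB, hB⟩ := Finite.exists_le_maximal
    (p := fun C : Set V => (G.induce C).Connected ∧ NoCutVertex (G.induce C)) ⟨hc, hn⟩
  exact ⟨B, hSB, hB.prop.1, hB.prop.2, fun C hBC hCc hCn => (hB.eq_of_le ⟨hCc, hCn⟩ hBC).symm⟩

def SimpleGraph.pathVerts (G : SimpleGraph V) (x y : V) : Set V :=
  {u | ∃ p : G.Walk x y, p.IsPath ∧ u ∈ p.support}

variable {x y : V}

theorem SimpleGraph.Reachable.start_mem_pathVerts (h : G.Reachable x y) : x ∈ G.pathVerts x y :=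
  let ⟨p, hp⟩ := h.exists_isPath; ⟨p, hp, p.start_mem_support⟩

theorem SimpleGraph.Reachable.end_mem_pathVerts (h : G.Reachable x y) : y ∈ G.pathVerts x y :=
  let ⟨p, hp⟩ := h.exists_isPath; ⟨p, hp, p.end_mem_support⟩

theorem SimpleGraph.Reachable.connected_induce_pathVerts (h : G.Reachable x y) :
    (G.induce (G.pathVerts x y)).Connected :=
  induce_connected_of_patches x h.start_mem_pathVerts fun ⟨q, hq, haq⟩ =>
    ⟨{u | u ∈ q.support}, fun _ hu => ⟨q, hq, hu⟩, q.start_mem_support, haq,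
      q.connected_induce_support.preconnected _ _⟩

/- `a` splits its path into two subpaths meeting only in `a`, so a vertex `v ≠ a` misses one
of them. -/
theorem SimpleGraph.reachable_start_or_end_of_mem_pathVerts_diff {v a : V}
    (ha : a ∈ G.pathVerts x y \ {v}) :
    (∃ hx : x ∈ G.pathVerts x y \ {v},
      (G.induce (G.pathVerts x y \ {v})).Reachable ⟨x, hx⟩ ⟨a, ha⟩) ∨
    (∃ hy : y ∈ G.pathVerts x y \ {v},
      (G.induce (G.pathVerts x y \ {v})).Reachable ⟨a, ha⟩ ⟨y, hy⟩) := by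
  obtain ⟨p, hp, hap⟩ := ha.1
  obtain ⟨q, r, -, -, rfl⟩ := hp.mem_support_iff_exists_append.1 hap
  by_cases hvq : v ∈ q.support
  · have hvr : v ∉ r.support := fun hvr =>
      hp.ne_of_mem_support_of_append (Ne.symm ha.2) hvq hvr rfl
    have hr : ∀ u ∈ r.support, u ∈ G.pathVerts x y \ {v} := fun u hu =>
      ⟨⟨_, hp, q.support_subset_support_append_right r hu⟩, fun huv => hvr (huv ▸ hu)⟩
    exact .inr ⟨hr y r.end_mem_support, (reachable_induce_iff _ _).2 ⟨r, hr⟩⟩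
  · have hq : ∀ u ∈ q.support, u ∈ G.pathVerts x y \ {v} := fun u hu =>
      ⟨⟨_, hp, q.support_subset_support_append_left r hu⟩, fun huv => hvq (huv ▸ hu)⟩
    exact .inl ⟨hq x q.start_mem_support, (reachable_induce_iff _ _).2 ⟨q, hq⟩⟩

theorem SimpleGraph.noCutVertex_induce_pathVerts
    (h : ∀ v, v ≠ x → v ≠ y → ∃ p : G.Walk x y, v ∉ p.support) :
    NoCutVertex (G.induce (G.pathVerts x y)) := by
  refine noCutVertex_induce_iff.2 fun v _ a b => ?_
  have hxy : ∀ hx hy, (G.induce (G.pathVerts x y \ {v})).Reachable ⟨x, hx⟩ ⟨y, hy⟩ := by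
    intro hx hy
    classical
    obtain ⟨p, hp⟩ := h v (Ne.symm hx.2) (Ne.symm hy.2)
    exact (reachable_induce_iff hx hy).2 ⟨p.bypass, fun u hu =>
      ⟨⟨_, p.bypass_isPath, hu⟩, fun huv => hp (huv ▸ p.support_bypass_subset_support hu)⟩⟩
  rcases reachable_start_or_end_of_mem_pathVerts_diff a.2 with ⟨hx, hxa⟩ | ⟨hy, hay⟩ <;>
    rcases reachable_start_or_end_of_mem_pathVerts_diff b.2 with ⟨hx', hxb⟩ | ⟨hy', hby⟩
  · exact hxa.symm.trans hxb
  · exact hxa.symm.trans ((hxy hx hy').trans hby.symm)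
  · exact hay.trans ((hxy hx' hy).symm.trans hxb)
  · exact hay.trans hby.symm

/- `S = ∅` is allowed for vertices in different components. -/
def HasSubsingletonSeparators (G : SimpleGraph V) : Prop :=
  ∀ x y : V, x ≠ y → ¬ G.Adj x y → ∃ S : Set V, IsSepSet G S x y ∧ S.Subsingleton

theorem hasSubsingletonSeparators_of_forall_isBlock_isClique [Finite V]
    (h : ∀ B : Set V, IsBlock G B → G.IsClique B) : HasSubsingletonSeparators G := by
  intro x y hxy hadj
  by_cases hr : G.Reachable x y
  swap
  · exact ⟨∅, ⟨Set.notMem_empty x, Set.notMem_empty y, fun p => absurd ⟨p⟩ hr⟩,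
      Set.subsingleton_empty⟩
  by_cases hcut : ∃ v, v ≠ x ∧ v ≠ y ∧ ∀ p : G.Walk x y, v ∈ p.support
  · obtain ⟨v, hvx, hvy, hv⟩ := hcut
    exact ⟨{v}, ⟨hvx.symm, hvy.symm, fun p => ⟨v, hv p, rfl⟩⟩, Set.subsingleton_singleton⟩
  push Not at hcut
  obtain ⟨B, hSB, hB⟩ := exists_isBlock_superset hr.connected_induce_pathVerts
    (noCutVertex_induce_pathVerts hcut)
  exact absurd ((h B hB).subset hSB hr.start_mem_pathVerts hr.end_mem_pathVerts hxy) hadj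

theorem IsBlock.isClique_of_hasSubsingletonSeparators (hsep : HasSubsingletonSeparators G)
    {B : Set V} (hB : IsBlock G B) : G.IsClique B := by
  intro x hx y hy hxy
  by_contra hadj
  obtain ⟨S, ⟨hxS, hyS, hmeet⟩, hS⟩ := hsep x y hxy hadj
  obtain ⟨p⟩ := (hB.1.preconnected ⟨x, hx⟩ ⟨y, hy⟩).map (Embedding.induce B).toHom
  obtain ⟨v, -, hvS⟩ := hmeet p
  obtain ⟨q, hq⟩ := exists_walk_not_mem_support_of_noCutVertex hB.1.preconnected hB.2.1 hx hy
    (fun h => hxS (h ▸ hvS)) (fun h => hyS (h ▸ hvS))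
  obtain ⟨w, hwq, hwS⟩ := hmeet q
  exact hq (hS hwS hvS ▸ hwq)

theorem mvd_eq_card_iff_exists_injective [Fintype V] :
    mvd G = Fintype.card V ↔ ∃ τ : V → ℕ, IsMVDColoring G τ ∧ Function.Injective τ := by
  set M := {k | ∃ τ : V → ℕ, IsMVDColoring G τ ∧ (Set.range τ).ncard = k}
  have hM : ∀ k ∈ M, k ≤ Fintype.card V := by
    rintro _ ⟨τ, -, rfl⟩
    exact Nat.card_eq_fintype_card (α := V) ▸ Set.ncard_range_le_natCard τ
  refine ⟨fun h => ?_, fun ⟨τ, hτ, hinj⟩ => IsGreatest.csSup_eq ⟨⟨τ, hτ, ?_⟩, hM⟩⟩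
  · rcases M.eq_empty_or_nonempty with hne | hne
    · have : IsEmpty V := by
        rw [← Fintype.card_eq_zero_iff, ← h]
        exact (congrArg sSup hne).trans csSup_empty
      exact ⟨fun _ => 0, isEmptyElim, fun x => isEmptyElim x⟩
    · obtain ⟨τ, hτ, hcard⟩ := (h ▸ Nat.sSup_mem hne ⟨_, hM⟩ : Fintype.card V ∈ M)
      exact ⟨τ, hτ,
        (Set.ncard_range_eq_natCard_iff τ).1 (hcard.trans Nat.card_eq_fintype_card.symm)⟩
  · exact (Set.ncard_range_eq_natCard_iff τ).2 hinj |>.trans Nat.card_eq_fintype_card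

theorem mvd_eq_card_iff_hasSubsingletonSeparators [Fintype V] :
    mvd G = Fintype.card V ↔ HasSubsingletonSeparators G := by
  rw [mvd_eq_card_iff_exists_injective]
  refine ⟨fun ⟨τ, hτ, hinj⟩ x y hxy hadj => ?_, fun h => ?_⟩
  · obtain ⟨S, hS, hmono⟩ := hτ x y hxy hadj
    exact ⟨S, hS, fun u hu w hw => hinj (hmono u hu w hw)⟩
  · refine ⟨fun v => Fintype.equivFin V v, fun x y hxy hadj => ?_,
      Fin.val_injective.comp (Fintype.equivFin V).injective⟩
    obtain ⟨S, hS, hsub⟩ := h x y hxy hadj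
    exact ⟨S, hS, fun u hu w hw => by rw [hsub hu hw]⟩

end

theorem mvd_eq_card_iff_blocks_complete_general [Fintype V] (G : SimpleGraph V) :
    mvd G = Fintype.card V ↔ ∀ B : Set V, IsBlock G B → G.IsClique B :=
  mvd_eq_card_iff_hasSubsingletonSeparators.trans
    ⟨fun h _ hB => hB.isClique_of_hasSubsingletonSeparators h,
      hasSubsingletonSeparators_of_forall_isBlock_isClique⟩

theorem mvd_eq_card_iff_blocks_complete [Fintype V] (G : SimpleGraph V)
    (hconn : G.Connected) :
    mvd G = Fintype.card V ↔ ∀ B : Set V, IsBlock G B → G.IsClique B :=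
  mvd_eq_card_iff_blocks_complete_general G
end

section
/- If G is obtained from the complete graph K_n (n ≥ 3) by deleting a single edge, then mvd(G) = 3. -/
open SimpleGraph

variable {V : Type*}

section Aux

variable (n : ℕ) (x y : Fin n)

private lemma exists_third (hn : 3 ≤ n) : ∃ z : Fin n, z ≠ x ∧ z ≠ y := by
  by_contra h
  push_neg at h
  have hsub : (Finset.univ : Finset (Fin n)) ⊆ {x, y} := by
    intro z _
    rcases eq_or_ne z x with hz | hz
    · simp [hz]
    · simp [h z hz]
  have := Finset.card_le_card hsub
  simp [Finset.card_univ] at this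
  have h2 : ({x, y} : Finset (Fin n)).card ≤ 2 := Finset.card_insert_le _ _ |>.trans (by simp)
  omega

private lemma adj_iff (u v : Fin n) :
    ((⊤ : SimpleGraph (Fin n)).deleteEdges {s(x, y)}).Adj u v ↔ u ≠ v ∧ s(u, v) ≠ s(x, y) := by
  simp [deleteEdges_adj]

end Aux

theorem mvd_complete_minus_edge (n : ℕ) (hn : 3 ≤ n) (x y : Fin n) (hxy : x ≠ y) :
    mvd ((⊤ : SimpleGraph (Fin n)).deleteEdges {s(x, y)}) = 3 := by
  set G := (⊤ : SimpleGraph (Fin n)).deleteEdges {s(x, y)} with hG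
  obtain ⟨z0, hz0x, hz0y⟩ := exists_third n x y hn
  have hnadj : ¬ G.Adj x y := by
    rw [adj_iff]; push_neg; intro _; rfl
  -- any MVD coloring is constant on vertices other than x, y
  have hconst : ∀ τ : Fin n → ℕ, IsMVDColoring G τ →
      ∀ u, u ≠ x → u ≠ y → τ u = τ z0 := by
    intro τ hτ u hux huy
    obtain ⟨S, ⟨hxS, hyS, hsep⟩, hmono⟩ := hτ x y hxy hnadj
    have key : ∀ z : Fin n, z ≠ x → z ≠ y → z ∈ S := by
      intro z hzx hzy
      have h1 : G.Adj x z := by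
        rw [adj_iff]
        refine ⟨fun h => hzx h.symm, fun h => ?_⟩
        rw [Sym2.eq_iff] at h
        rcases h with ⟨_, h⟩ | ⟨h, _⟩
        · exact hzy h
        · exact hxy h
      have h2 : G.Adj z y := by
        rw [adj_iff]
        refine ⟨hzy, fun h => ?_⟩
        rw [Sym2.eq_iff] at h
        rcases h with ⟨h, _⟩ | ⟨h, _⟩
        · exact hzx h
        · exact hzy h
      obtain ⟨v, hv, hvS⟩ := hsep (Walk.cons h1 (Walk.cons h2 Walk.nil))
      simp [Walk.support_cons] at hv
      rcases hv with rfl | rfl | rfl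
      · exact absurd hvS hxS
      · exact hvS
      · exact absurd hvS hyS
    exact hmono u (key u hux huy) z0 (key z0 hz0x hz0y)
  have h3mem : (3 : ℕ) ∈ {k | ∃ τ : Fin n → ℕ, IsMVDColoring G τ ∧ (Set.range τ).ncard = k} := by
    refine ⟨fun v => if v = x then 1 else if v = y then 2 else 0, ?_, ?_⟩
    · intro u v huv hadj
      rw [adj_iff] at hadj
      push_neg at hadj
      have hs : s(u, v) = s(x, y) := hadj huv
      rw [Sym2.eq_iff] at hs
      refine ⟨{z | z ≠ x ∧ z ≠ y}, ⟨?_, ?_, ?_⟩, ?_⟩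
      · rcases hs with ⟨rfl, rfl⟩ | ⟨rfl, rfl⟩ <;> simp
      · rcases hs with ⟨rfl, rfl⟩ | ⟨rfl, rfl⟩ <;> simp
      · intro p
        cases p with
        | nil => exact absurd rfl huv
        | cons h q =>
          rename_i w
          refine ⟨w, by simp, ?_⟩
          rw [adj_iff] at h
          constructor
          · rintro rfl
            rcases hs with ⟨rfl, rfl⟩ | ⟨rfl, rfl⟩
            · exact h.1 rfl
            · exact h.2 (Sym2.eq_swap)
          · rintro rfl
            rcases hs with ⟨rfl, rfl⟩ | ⟨rfl, rfl⟩
            · exact h.2 rfl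
            · exact h.1 rfl
      · rintro a ⟨hax, hay⟩ b ⟨hbx, hby⟩
        simp [hax, hay, hbx, hby]
    · have hr : Set.range (fun v : Fin n => if v = x then 1 else if v = y then 2 else 0)
          = {1, 2, 0} := by
        ext k
        constructor
        · rintro ⟨v, rfl⟩
          by_cases hv : v = x
          · simp [hv]
          · by_cases hv' : v = y
            · subst hv'
              simp [Ne.symm hxy]
            · simp [hv, hv']
        · rintro (rfl | rfl | rfl)
          · exact ⟨x, by simp⟩
          · exact ⟨y, by simp [hxy.symm, hxy]⟩
          · exact ⟨z0, by simp [hz0x, hz0y]⟩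
      rw [hr]
      rw [Set.ncard_insert_of_notMem (by simp), Set.ncard_insert_of_notMem (by simp)]
      simp
  refine le_antisymm ?_ (le_csSup ⟨3, ?_⟩ h3mem)
  · apply csSup_le'
    rintro k ⟨τ, hτ, rfl⟩
    have hsub : Set.range τ ⊆ {τ x, τ y, τ z0} := by
      rintro c ⟨v, rfl⟩
      by_cases hv : v = x
      · simp [hv]
      · by_cases hv' : v = y
        · simp [hv']
        · right; right; exact hconst τ hτ v hv hv'
    calc (Set.range τ).ncard ≤ ({τ x, τ y, τ z0} : Set ℕ).ncard :=
          Set.ncard_le_ncard hsub (Set.toFinite _)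
      _ ≤ 3 := by
          refine (Set.ncard_insert_le _ _).trans ?_
          have := Set.ncard_insert_le (τ y) ({τ z0} : Set ℕ)
          simp [Set.ncard_singleton] at this ⊢
          omega
  · rintro k ⟨τ, hτ, rfl⟩
    have hsub : Set.range τ ⊆ {τ x, τ y, τ z0} := by
      rintro c ⟨v, rfl⟩
      by_cases hv : v = x
      · simp [hv]
      · by_cases hv' : v = y
        · simp [hv']
        · right; right; exact hconst τ hτ v hv hv'
    calc (Set.range τ).ncard ≤ ({τ x, τ y, τ z0} : Set ℕ).ncard :=
          Set.ncard_le_ncard hsub (Set.toFinite _)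
      _ ≤ 3 := by
          refine (Set.ncard_insert_le _ _).trans ?_
          have := Set.ncard_insert_le (τ y) ({τ z0} : Set ℕ)
          simp [Set.ncard_singleton] at this ⊢
          omega
end

section
/- If G is obtained from the complete graph K_n (n ≥ 4) by deleting two edges, then mvd(G) ≤ 4. -/
open SimpleGraph

variable {V : Type*}

/-- Every common neighbor of a separated pair lies in a separating set, hence any
MVD coloring gives a set containing all common neighbors, all of one color. -/
lemma key_mono {G : SimpleGraph V} {τ : V → ℕ} (hτ : IsMVDColoring G τ)
    {x y : V} (hxy : x ≠ y) (hna : ¬ G.Adj x y) :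
    ∃ S : Set V, (∀ u, G.Adj x u → G.Adj u y → u ∈ S) ∧
      ∀ u ∈ S, ∀ w ∈ S, τ u = τ w := by
  obtain ⟨S, ⟨hxS, hyS, hsep⟩, hmono⟩ := hτ x y hxy hna
  refine ⟨S, fun u hxu huy => ?_, hmono⟩
  obtain ⟨v, hv, hvS⟩ := hsep (Walk.cons hxu (Walk.cons huy Walk.nil))
  simp only [Walk.support_cons, Walk.support_nil, List.mem_cons,
    List.mem_singleton, List.not_mem_nil, or_false] at hv
  rcases hv with rfl | rfl | rfl
  · exact absurd hvS hxS
  · exact hvS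
  · exact absurd hvS hyS

theorem mvd_complete_minus_two_edges (n : ℕ) (hn : 4 ≤ n)
    (e₁ e₂ : Sym2 (Fin n)) (he : e₁ ≠ e₂)
    (h₁ : ¬ e₁.IsDiag) (h₂ : ¬ e₂.IsDiag) :
    mvd ((⊤ : SimpleGraph (Fin n)).deleteEdges {e₁, e₂}) ≤ 4 := by
  set G := (⊤ : SimpleGraph (Fin n)).deleteEdges {e₁, e₂} with hG
  apply csSup_le'
  rintro k ⟨τ, hτ, rfl⟩
  induction e₁ using Sym2.ind with | _ a b => ?_
  induction e₂ using Sym2.ind with | _ c d => ?_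
  have hab : a ≠ b := by simpa using h₁
  have hcd : c ≠ d := by simpa using h₂
  have hadj : ∀ x y : Fin n, x ≠ y → s(x, y) ≠ s(a, b) → s(x, y) ≠ s(c, d) →
      G.Adj x y := by
    intro x y hne h1 h2
    simp only [hG, deleteEdges_adj, top_adj, Set.mem_insert_iff,
      Set.mem_singleton_iff]
    exact ⟨hne, by tauto⟩
  have hnab : ¬ G.Adj a b := by
    simp [hG, deleteEdges_adj]
  -- find r such that all vertices outside {a, b, r} are common neighbors of a and b
  have hr : ∃ r : Fin n, ∀ v, v ≠ a → v ≠ b → v ≠ r → G.Adj a v ∧ G.Adj v b := by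
    by_cases hc : c = a ∨ c = b
    · refine ⟨d, fun v hva hvb hvd => ?_⟩
      constructor
      · refine hadj a v (Ne.symm hva) ?_ ?_ <;> intro heq <;> rw [Sym2.eq_iff] at heq <;>
          rcases heq with ⟨h1, h2⟩ | ⟨h1, h2⟩ <;> simp_all
      · refine hadj v b hvb ?_ ?_ <;> intro heq <;> rw [Sym2.eq_iff] at heq <;>
          rcases heq with ⟨h1, h2⟩ | ⟨h1, h2⟩ <;> simp_all
    · refine ⟨c, fun v hva hvb hvc => ?_⟩
      push_neg at hc
      constructor
      · refine hadj a v (Ne.symm hva) ?_ ?_ <;> intro heq <;> rw [Sym2.eq_iff] at heq <;>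
          rcases heq with ⟨h1, h2⟩ | ⟨h1, h2⟩ <;> simp_all
      · refine hadj v b hvb ?_ ?_ <;> intro heq <;> rw [Sym2.eq_iff] at heq <;>
          rcases heq with ⟨h1, h2⟩ | ⟨h1, h2⟩ <;> simp_all
  obtain ⟨r, hr⟩ := hr
  obtain ⟨S, hS, hmono⟩ := key_mono hτ hab hnab
  by_cases hw : ∃ w : Fin n, w ≠ a ∧ w ≠ b ∧ w ≠ r
  · obtain ⟨w, hwa, hwb, hwr⟩ := hw
    have hsub : Set.range τ ⊆ ({τ a, τ b, τ r, τ w} : Set ℕ) := by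
      rintro _ ⟨x, rfl⟩
      by_cases hxa : x = a
      · subst hxa; simp
      by_cases hxb : x = b
      · subst hxb; simp
      by_cases hxr : x = r
      · subst hxr; simp
      have hx := hr x hxa hxb hxr
      have hw' := hr w hwa hwb hwr
      have : τ x = τ w := hmono x (hS x hx.1 hx.2) w (hS w hw'.1 hw'.2)
      simp [this]
    calc (Set.range τ).ncard ≤ ({τ a, τ b, τ r, τ w} : Set ℕ).ncard :=
          Set.ncard_le_ncard hsub (Set.toFinite _)
      _ ≤ ({τ b, τ r, τ w} : Set ℕ).ncard + 1 := Set.ncard_insert_le _ _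
      _ ≤ (({τ r, τ w} : Set ℕ).ncard + 1) + 1 := by
          exact Nat.add_le_add_right (Set.ncard_insert_le _ _) 1
      _ ≤ ((({τ w} : Set ℕ).ncard + 1) + 1) + 1 := by
          exact Nat.add_le_add_right (Nat.add_le_add_right (Set.ncard_insert_le _ _) 1) 1
      _ ≤ 4 := by simp [Set.ncard_singleton]
  · push_neg at hw
    have hsub : Set.range τ ⊆ ({τ a, τ b, τ r} : Set ℕ) := by
      rintro _ ⟨x, rfl⟩
      by_cases hxa : x = a
      · subst hxa; simp
      by_cases hxb : x = b
      · subst hxb; simp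
      have := hw x hxa hxb
      subst this; simp
    calc (Set.range τ).ncard ≤ ({τ a, τ b, τ r} : Set ℕ).ncard :=
          Set.ncard_le_ncard hsub (Set.toFinite _)
      _ ≤ ({τ b, τ r} : Set ℕ).ncard + 1 := Set.ncard_insert_le _ _
      _ ≤ (({τ r} : Set ℕ).ncard + 1) + 1 := by
          exact Nat.add_le_add_right (Set.ncard_insert_le _ _) 1
      _ ≤ 4 := by simp [Set.ncard_singleton]
end
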